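/- arXiv:0807.5058 — 4 statements merged into one kernel-verified Lean document; each statement's English description precedes it below -/
import Mathlib

section
/- Let Λ be an m×n complex matrix, π an n×n diagonal matrix with strictly positive real diagonal entries, and Γ an n×m matrix satisfying ΛΓΛ = Λ and πΓΛ = Λ†Γ†π. Then for every y in the range of Λ and every n-vector z, the Pythagorean identity ‖Γy + (I − ΓΛ)z‖²_π = ‖Γy‖²_π + ‖(I − ΓΛ)z‖²_π holds, where ‖c‖²_π = Σ_i π_ii |c_i|². -/
/-! Write `G = ΓΛ` and `D = diag π`. From `ΛΓΛ = Λ`, `G` is idempotent, and the minimum-norm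
condition says `DG = GᴴD`, i.e. `G` is self-adjoint for the `π`-inner product. Hence
`GᴴD(1 - G) = DG(1 - G) = 0`: the ranges of `G` and `1 - G` are `π`-orthogonal. For `y = Λu` we have
`Γy = Gu`, so the identity is Pythagoras for the weighted norm. -/

open Matrix

theorem sum_weighted_norm_add_sq_of_orthogonal {ι 𝕜 : Type*} [Fintype ι] [DecidableEq ι]
    [RCLike 𝕜] (p : ι → ℝ) {a b : ι → 𝕜}
    (h : star a ⬝ᵥ diagonal (fun i => (p i : 𝕜)) *ᵥ b = 0) :
    ∑ i, p i * ‖(a + b) i‖ ^ 2 = ∑ i, p i * ‖a i‖ ^ 2 + ∑ i, p i * ‖b i‖ ^ 2 := by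
  have cross : ∑ i, p i * RCLike.re (inner 𝕜 (a i) (b i)) = 0 := by
    have hre := congrArg RCLike.re h
    simp only [dotProduct, mulVec_diagonal, map_sum, map_zero, RCLike.inner_apply] at hre ⊢
    rw [← hre]
    refine Finset.sum_congr rfl fun i _ => ?_
    rw [Pi.star_apply, RCLike.star_def, ← RCLike.re_ofReal_mul]
    ring_nf
  calc ∑ i, p i * ‖(a + b) i‖ ^ 2
      = ∑ i, (p i * ‖a i‖ ^ 2 + p i * ‖b i‖ ^ 2 + 2 * (p i * RCLike.re (inner 𝕜 (a i) (b i)))) :=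
        Finset.sum_congr rfl fun i _ => by rw [Pi.add_apply, norm_add_sq (𝕜 := 𝕜)]; ring
    _ = ∑ i, p i * ‖a i‖ ^ 2 + ∑ i, p i * ‖b i‖ ^ 2 := by
        rw [Finset.sum_add_distrib, Finset.sum_add_distrib, ← Finset.mul_sum, cross, mul_zero,
          add_zero]

theorem isIdempotentElem_mul_of_mul_mul_eq {m n R : Type*} [Fintype m] [Fintype n] [Semiring R]
    {Λ : Matrix m n R} {Γ : Matrix n m R} (h : Λ * Γ * Λ = Λ) : IsIdempotentElem (Γ * Λ) := by
  rw [IsIdempotentElem, Matrix.mul_assoc, ← Matrix.mul_assoc Λ, h]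

theorem star_mulVec_dotProduct_mulVec_one_sub_mulVec_eq_zero {ι R : Type*} [Fintype ι]
    [DecidableEq ι] [Ring R] [StarRing R] {G D : Matrix ι ι R} (hG : IsIdempotentElem G)
    (hD : D * G = Gᴴ * D) (u z : ι → R) :
    star (G *ᵥ u) ⬝ᵥ D *ᵥ ((1 - G) *ᵥ z) = 0 := by
  have hzero : Gᴴ * D * (1 - G) = 0 := by
    rw [← hD, Matrix.mul_assoc, Matrix.mul_sub, Matrix.mul_one, hG.eq, sub_self, Matrix.mul_zero]
  rw [star_mulVec, mulVec_mulVec, dotProduct_mulVec, vecMul_vecMul, ← Matrix.mul_assoc, hzero,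
    vecMul_zero, zero_dotProduct]

theorem pythagorean_min_norm_ginverse_general {m n : ℕ}
    (Λ : Matrix (Fin m) (Fin n) ℂ) (Γ : Matrix (Fin n) (Fin m) ℂ)
    (p : Fin n → ℝ)
    (hΓ : Λ * Γ * Λ = Λ)
    (hmin : Matrix.diagonal (fun i => (p i : ℂ)) * (Γ * Λ) =
      Λᴴ * Γᴴ * Matrix.diagonal (fun i => (p i : ℂ))) :
    ∀ y : Fin m → ℂ, (∃ u : Fin n → ℂ, Λ.mulVec u = y) →
      ∀ z : Fin n → ℂ,
        ∑ i, p i * ‖(Γ.mulVec y +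
            ((1 : Matrix (Fin n) (Fin n) ℂ) - Γ * Λ).mulVec z) i‖ ^ 2 =
          ∑ i, p i * ‖Γ.mulVec y i‖ ^ 2 +
            ∑ i, p i * ‖((1 : Matrix (Fin n) (Fin n) ℂ) - Γ * Λ).mulVec z i‖ ^ 2 := by
  rintro y ⟨u, rfl⟩ z
  rw [← conjTranspose_mul] at hmin
  rw [mulVec_mulVec]
  have horth := star_mulVec_dotProduct_mulVec_one_sub_mulVec_eq_zero
    (isIdempotentElem_mul_of_mul_mul_eq hΓ) hmin u z
  exact sum_weighted_norm_add_sq_of_orthogonal p horth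

/-- Pythagorean identity for a minimum-norm g-inverse:
‖Γy + (I − ΓΛ)z‖²_π = ‖Γy‖²_π + ‖(I − ΓΛ)z‖²_π for all y in the range of Λ. -/
theorem pythagorean_min_norm_ginverse {m n : ℕ}
    (Λ : Matrix (Fin m) (Fin n) ℂ) (Γ : Matrix (Fin n) (Fin m) ℂ)
    (p : Fin n → ℝ) (hp : ∀ i, 0 < p i)
    (hΓ : Λ * Γ * Λ = Λ)
    (hmin : Matrix.diagonal (fun i => (p i : ℂ)) * (Γ * Λ) =
      Λᴴ * Γᴴ * Matrix.diagonal (fun i => (p i : ℂ))) :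
    ∀ y : Fin m → ℂ, (∃ u : Fin n → ℂ, Λ.mulVec u = y) →
      ∀ z : Fin n → ℂ,
        ∑ i, p i * ‖(Γ.mulVec y +
            ((1 : Matrix (Fin n) (Fin n) ℂ) - Γ * Λ).mulVec z) i‖ ^ 2 =
          ∑ i, p i * ‖Γ.mulVec y i‖ ^ 2 +
            ∑ i, p i * ‖((1 : Matrix (Fin n) (Fin n) ℂ) - Γ * Λ).mulVec z i‖ ^ 2 :=
  pythagorean_min_norm_ginverse_general Λ Γ p hΓ hmin
end

section
/- Let Λ be an m×n complex matrix, π an n×n diagonal matrix with strictly positive real diagonal entries, and Γ a generalized inverse of Λ (ΛΓΛ = Λ). Suppose that for all n-vectors z and u, 0 ≤ ‖(I − ΓΛ)z‖²_π + z†(I − Λ†Γ†)πΓΛu + u†Λ†Γ†π(I − ΓΛ)z, where ‖c‖²_π = Σ_i π_ii |c_i|². Then (I − Λ†Γ†)πΓΛ = 0. -/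
/-!
Write `M = (I − Λ†Γ†) π Γ Λ`; since π is real diagonal, the last summand is `u† M† z`, the
conjugate of the middle one. Replacing `u` by `c • u` for a complex scalar `c` makes the sum
`q + 2 Re (c · z† M u)` with `q` independent of `c`, and such an expression stays nonnegative for
all `c` only if `z† M u = 0`. Taking `z`, `u` standard basis vectors gives `M = 0`.
-/

open Matrix ComplexOrder

theorem Complex.eq_zero_of_forall_nonneg_add_mul_add_conj {q : ℝ} {s : ℂ}
    (h : ∀ c : ℂ, 0 ≤ (q : ℂ) + c * s + star (c * s)) : s = 0 := by
  by_contra hs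
  have key := h (-((|q| + 1 : ℝ) : ℂ) / s)
  rw [div_mul_cancel₀ _ hs, Complex.star_def, ← Complex.ofReal_neg, Complex.conj_ofReal,
    ← Complex.ofReal_add, ← Complex.ofReal_add, Complex.zero_le_real] at key
  linarith [le_abs_self q, abs_nonneg q]

theorem Matrix.star_dotProduct_conjTranspose_mulVec {m n α : Type*} [Fintype m] [Fintype n]
    [NonUnitalSemiring α] [StarRing α] (M : Matrix m n α) (z : m → α) (u : n → α) :
    star u ⬝ᵥ Mᴴ *ᵥ z = star (star z ⬝ᵥ M *ᵥ u) := by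
  rw [mulVec_conjTranspose, star_dotProduct_star, dotProduct_mulVec]

theorem Matrix.eq_zero_of_forall_nonneg_add_dotProduct_mulVec {m n : Type*} [Fintype m]
    [Fintype n] [DecidableEq m] [DecidableEq n] (M : Matrix m n ℂ) (q : (m → ℂ) → ℝ)
    (h : ∀ z u, 0 ≤ (q z : ℂ) + star z ⬝ᵥ M *ᵥ u + star u ⬝ᵥ Mᴴ *ᵥ z) : M = 0 := by
  have hzero : ∀ z u, star z ⬝ᵥ M *ᵥ u = 0 := fun z u =>
    Complex.eq_zero_of_forall_nonneg_add_mul_add_conj fun c => by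
      simpa only [mulVec_smul, dotProduct_smul, smul_eq_mul,
        star_dotProduct_conjTranspose_mulVec] using h z (c • u)
  ext i j
  simpa using hzero (Pi.single i 1) (Pi.single j 1)

theorem cross_term_zero_of_nonneg_general {m n : ℕ}
    (Λ : Matrix (Fin m) (Fin n) ℂ) (Γ : Matrix (Fin n) (Fin m) ℂ)
    (p : Fin n → ℝ)
    (hpos : ∀ z u : Fin n → ℂ,
      (0 : ℂ) ≤
        ((∑ i, p i * ‖((1 : Matrix (Fin n) (Fin n) ℂ) - Γ * Λ).mulVec z i‖ ^ 2 : ℝ) : ℂ)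
        + star z ⬝ᵥ (((1 : Matrix (Fin n) (Fin n) ℂ) - Λᴴ * Γᴴ) *
            (Matrix.diagonal (fun i => (p i : ℂ)) * (Γ * Λ))).mulVec u
        + star u ⬝ᵥ (Λᴴ * Γᴴ * Matrix.diagonal (fun i => (p i : ℂ)) *
            ((1 : Matrix (Fin n) (Fin n) ℂ) - Γ * Λ)).mulVec z) :
    ((1 : Matrix (Fin n) (Fin n) ℂ) - Λᴴ * Γᴴ) *
      (Matrix.diagonal (fun i => (p i : ℂ)) * (Γ * Λ)) = 0 := by
  refine eq_zero_of_forall_nonneg_add_dotProduct_mulVec _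
    (fun z => ∑ i, p i * ‖((1 - Γ * Λ) *ᵥ z) i‖ ^ 2) fun z u => ?_
  have hπ : (diagonal fun i => (p i : ℂ))ᴴ = diagonal fun i => (p i : ℂ) := by
    rw [diagonal_conjTranspose]
    exact congrArg diagonal (funext fun i => Complex.conj_ofReal (p i))
  simpa only [conjTranspose_mul, conjTranspose_sub, conjTranspose_one,
    conjTranspose_conjTranspose, hπ] using hpos z u

/-- if for all vectors z, u the quantity
‖(I − ΓΛ)z‖²_π + z†(I − Λ†Γ†)πΓΛu + u†Λ†Γ†π(I − ΓΛ)z is nonnegative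
(as a complex number, i.e. real and ≥ 0), then (I − Λ†Γ†)πΓΛ = 0. -/
theorem cross_term_zero_of_nonneg {m n : ℕ}
    (Λ : Matrix (Fin m) (Fin n) ℂ) (Γ : Matrix (Fin n) (Fin m) ℂ)
    (p : Fin n → ℝ) (hp : ∀ i, 0 < p i)
    (hΓ : Λ * Γ * Λ = Λ)
    (hpos : ∀ z u : Fin n → ℂ,
      (0 : ℂ) ≤
        ((∑ i, p i * ‖((1 : Matrix (Fin n) (Fin n) ℂ) - Γ * Λ).mulVec z i‖ ^ 2 : ℝ) : ℂ)
        + star z ⬝ᵥ (((1 : Matrix (Fin n) (Fin n) ℂ) - Λᴴ * Γᴴ) *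
            (Matrix.diagonal (fun i => (p i : ℂ)) * (Γ * Λ))).mulVec u
        + star u ⬝ᵥ (Λᴴ * Γᴴ * Matrix.diagonal (fun i => (p i : ℂ)) *
            ((1 : Matrix (Fin n) (Fin n) ℂ) - Γ * Λ)).mulVec z) :
    ((1 : Matrix (Fin n) (Fin n) ℂ) - Λᴴ * Γᴴ) *
      (Matrix.diagonal (fun i => (p i : ℂ)) * (Γ * Λ)) = 0 :=
  cross_term_zero_of_nonneg_general Λ Γ p hpos
end

section
/- Let Λ be an m×n complex matrix, M an n×n Hermitian idempotent with Λ(I − M) = 0 (equivalently ΛM = Λ), π any n×n complex matrix, and set A := (I − M)π(I − M). Let B be an n×n matrix satisfying the Penrose conditions BAB = B and (BA)† = BA. Then (I − M)B = B, and consequently ΛB = 0. -/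
open Matrix

/-! The Penrose equations give `B = BAB = (BA)† B = A† B† B`, so the range of `B` lies in the
range of `A† = (I − M) π† (I − M)`, on which the projection `I − M` acts as the identity. -/

section Penrose

variable {R : Type*} [Semigroup R]

theorem IsIdempotentElem.mul_eq_self_of_eq_mul {p x y : R} (hp : IsIdempotentElem p)
    (h : x = p * y) : p * x = x := by
  rw [h, ← mul_assoc, hp.eq]

variable [StarMul R]

theorem eq_star_mul_star_mul_of_penrose {a b : R} (hbab : b * a * b = b)
    (hba : IsSelfAdjoint (b * a)) : b = star a * star b * b :=
  calc b = b * a * b := hbab.symm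
    _ = star (b * a) * b := by rw [hba.star_eq]
    _ = star a * star b * b := by rw [star_mul]

theorem mul_eq_self_of_penrose_compression {q c b : R} (hq : IsSelfAdjoint q)
    (hq2 : IsIdempotentElem q) (hbab : b * (q * c * q) * b = b)
    (hba : IsSelfAdjoint (b * (q * c * q))) : q * b = b := by
  have hb := eq_star_mul_star_mul_of_penrose hbab hba
  simp only [star_mul, hq.star_eq, mul_assoc] at hb
  exact hq2.mul_eq_self_of_eq_mul hb

end Penrose

/-- with M a Hermitian idempotent, Λ(I − M) = 0, A = (I − M)π(I − M),
and B satisfying BAB = B and (BA)† = BA, one has (I − M)B = B and ΛB = 0. -/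
theorem pinv_range_and_kernel {m n : ℕ}
    (Λ : Matrix (Fin m) (Fin n) ℂ)
    (M : Matrix (Fin n) (Fin n) ℂ)
    (hM : Mᴴ = M) (hM2 : M * M = M)
    (hΛM : Λ * ((1 : Matrix (Fin n) (Fin n) ℂ) - M) = 0)
    (π : Matrix (Fin n) (Fin n) ℂ)
    (B : Matrix (Fin n) (Fin n) ℂ)
    (hBAB : B * (((1 : Matrix (Fin n) (Fin n) ℂ) - M) * π *
        ((1 : Matrix (Fin n) (Fin n) ℂ) - M)) * B = B)
    (hBA : (B * (((1 : Matrix (Fin n) (Fin n) ℂ) - M) * π *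
        ((1 : Matrix (Fin n) (Fin n) ℂ) - M)))ᴴ =
      B * (((1 : Matrix (Fin n) (Fin n) ℂ) - M) * π *
        ((1 : Matrix (Fin n) (Fin n) ℂ) - M))) :
    ((1 : Matrix (Fin n) (Fin n) ℂ) - M) * B = B ∧ Λ * B = 0 := by
  have hQ : IsSelfAdjoint (1 - M) := (IsSelfAdjoint.one _).sub hM
  have hQB : (1 - M) * B = B :=
    mul_eq_self_of_penrose_compression hQ (IsIdempotentElem.one_sub hM2) hBAB hBA
  refine ⟨hQB, ?_⟩
  rw [← hQB, ← Matrix.mul_assoc, hΛM, Matrix.zero_mul]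
end

section
/- Let Λ be an m×n complex matrix and Γ_mp a matrix satisfying the Moore–Penrose conditions Γ_mpΛΓ_mp = Γ_mp, ΛΓ_mpΛ = Λ, (Γ_mpΛ)† = Γ_mpΛ, (ΛΓ_mp)† = ΛΓ_mp; set M := Γ_mpΛ. Let π be an n×n diagonal matrix with strictly positive real diagonal entries, A := (I − M)π(I − M), and let B satisfy the Penrose conditions ABA = A, BAB = B, (AB)† = AB, (BA)† = BA. Then the matrix Γ_opt := Γ_mp − BπMΓ_mp is a generalized inverse of Λ: ΛΓ_optΛ = Λ. -/
/-!
`Γ_opt` differs from `Γ_mp` by a term with left factor `B`, so it suffices that `ΛB = 0`.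
The Penrose equations for `B` give `B = (BA)ᴴB = AᴴBᴴB`, and `ΛAᴴ = 0` because
`Aᴴ = (I - M)πᴴ(I - M)` (as `M` is Hermitian) while `Λ(I - M) = Λ - ΛΓ_mpΛ = 0`.
-/

open Matrix

namespace Matrix

variable {l m n α : Type*} [Fintype m] [Fintype n] [CommSemiring α] [StarRing α]

theorem mul_eq_zero_of_mul_conjTranspose_eq_zero {X : Matrix l n α}
    {A : Matrix m n α} {B : Matrix n m α} (hBAB : B * A * B = B)
    (hBA : (B * A)ᴴ = B * A) (hX : X * Aᴴ = 0) : X * B = 0 :=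
  calc X * B = X * ((B * A)ᴴ * B) := by rw [hBA, hBAB]
    _ = X * Aᴴ * (Bᴴ * B) := by rw [conjTranspose_mul]; simp only [Matrix.mul_assoc]
    _ = 0 := by rw [hX, Matrix.zero_mul]

end Matrix

section GeneralizedInverse

variable {m n α : Type*} [Fintype m] [Fintype n] [DecidableEq n]

theorem mul_one_sub_mul_eq_zero [Ring α] {Λ : Matrix m n α} {Γ : Matrix n m α}
    (h : Λ * Γ * Λ = Λ) : Λ * (1 - Γ * Λ) = 0 := by
  rw [Matrix.mul_sub, Matrix.mul_one, ← Matrix.mul_assoc, h, sub_self]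

variable [CommRing α] [StarRing α] {Λ : Matrix m n α} {Γ : Matrix n m α}

theorem mul_conjTranspose_one_sub_mul_sandwich_eq_zero (h : Λ * Γ * Λ = Λ)
    (hH : (Γ * Λ)ᴴ = Γ * Λ) (π : Matrix n n α) :
    Λ * ((1 - Γ * Λ) * π * (1 - Γ * Λ))ᴴ = 0 := by
  have hP : (1 - Γ * Λ)ᴴ = 1 - Γ * Λ := by rw [conjTranspose_sub, conjTranspose_one, hH]
  rw [conjTranspose_mul, conjTranspose_mul, hP, ← Matrix.mul_assoc,
    mul_one_sub_mul_eq_zero h, Matrix.zero_mul]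

end GeneralizedInverse

theorem gamma_opt_is_ginverse_general {m n : ℕ}
    (Λ : Matrix (Fin m) (Fin n) ℂ) (Γmp : Matrix (Fin n) (Fin m) ℂ)
    (h2 : Λ * Γmp * Λ = Λ)
    (h3 : (Γmp * Λ)ᴴ = Γmp * Λ)
    (p : Fin n → ℝ)
    (B : Matrix (Fin n) (Fin n) ℂ)
    (hBAB : B * (((1 : Matrix (Fin n) (Fin n) ℂ) - Γmp * Λ) *
        Matrix.diagonal (fun i => (p i : ℂ)) *
        ((1 : Matrix (Fin n) (Fin n) ℂ) - Γmp * Λ)) * B = B)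
    (hBA : (B * (((1 : Matrix (Fin n) (Fin n) ℂ) - Γmp * Λ) *
        Matrix.diagonal (fun i => (p i : ℂ)) *
        ((1 : Matrix (Fin n) (Fin n) ℂ) - Γmp * Λ)))ᴴ =
      B * (((1 : Matrix (Fin n) (Fin n) ℂ) - Γmp * Λ) *
        Matrix.diagonal (fun i => (p i : ℂ)) *
        ((1 : Matrix (Fin n) (Fin n) ℂ) - Γmp * Λ))) :
    Λ * (Γmp - B * Matrix.diagonal (fun i => (p i : ℂ)) * (Γmp * Λ) * Γmp) * Λ
      = Λ := by
  have hΛB : Λ * B = 0 := mul_eq_zero_of_mul_conjTranspose_eq_zero hBAB hBA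
    (mul_conjTranspose_one_sub_mul_sandwich_eq_zero h2 h3 _)
  simp only [Matrix.mul_sub, h2, ← Matrix.mul_assoc, hΛB, Matrix.zero_mul,
    sub_zero]

/-- Γ_opt := Γ_mp − BπMΓ_mp is a generalized inverse of Λ,
where M = Γ_mpΛ and B is the Moore–Penrose inverse of A = (I − M)π(I − M). -/
theorem gamma_opt_is_ginverse {m n : ℕ}
    (Λ : Matrix (Fin m) (Fin n) ℂ) (Γmp : Matrix (Fin n) (Fin m) ℂ)
    (h1 : Γmp * Λ * Γmp = Γmp)
    (h2 : Λ * Γmp * Λ = Λ)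
    (h3 : (Γmp * Λ)ᴴ = Γmp * Λ)
    (h4 : (Λ * Γmp)ᴴ = Λ * Γmp)
    (p : Fin n → ℝ) (hp : ∀ i, 0 < p i)
    (B : Matrix (Fin n) (Fin n) ℂ)
    (hABA : (((1 : Matrix (Fin n) (Fin n) ℂ) - Γmp * Λ) *
        Matrix.diagonal (fun i => (p i : ℂ)) *
        ((1 : Matrix (Fin n) (Fin n) ℂ) - Γmp * Λ)) * B *
        (((1 : Matrix (Fin n) (Fin n) ℂ) - Γmp * Λ) *
        Matrix.diagonal (fun i => (p i : ℂ)) *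
        ((1 : Matrix (Fin n) (Fin n) ℂ) - Γmp * Λ)) =
      ((1 : Matrix (Fin n) (Fin n) ℂ) - Γmp * Λ) *
        Matrix.diagonal (fun i => (p i : ℂ)) *
        ((1 : Matrix (Fin n) (Fin n) ℂ) - Γmp * Λ))
    (hBAB : B * (((1 : Matrix (Fin n) (Fin n) ℂ) - Γmp * Λ) *
        Matrix.diagonal (fun i => (p i : ℂ)) *
        ((1 : Matrix (Fin n) (Fin n) ℂ) - Γmp * Λ)) * B = B)
    (hAB : ((((1 : Matrix (Fin n) (Fin n) ℂ) - Γmp * Λ) *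
        Matrix.diagonal (fun i => (p i : ℂ)) *
        ((1 : Matrix (Fin n) (Fin n) ℂ) - Γmp * Λ)) * B)ᴴ =
      (((1 : Matrix (Fin n) (Fin n) ℂ) - Γmp * Λ) *
        Matrix.diagonal (fun i => (p i : ℂ)) *
        ((1 : Matrix (Fin n) (Fin n) ℂ) - Γmp * Λ)) * B)
    (hBA : (B * (((1 : Matrix (Fin n) (Fin n) ℂ) - Γmp * Λ) *
        Matrix.diagonal (fun i => (p i : ℂ)) *
        ((1 : Matrix (Fin n) (Fin n) ℂ) - Γmp * Λ)))ᴴ =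
      B * (((1 : Matrix (Fin n) (Fin n) ℂ) - Γmp * Λ) *
        Matrix.diagonal (fun i => (p i : ℂ)) *
        ((1 : Matrix (Fin n) (Fin n) ℂ) - Γmp * Λ))) :
    Λ * (Γmp - B * Matrix.diagonal (fun i => (p i : ℂ)) * (Γmp * Λ) * Γmp) * Λ
      = Λ :=
  gamma_opt_is_ginverse_general Λ Γmp h2 h3 p B hBAB hBA
end
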